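/- In the DLSR setup with stepsize μ > 0 and decay factor β > 0 satisfying μβ ≤ 1, and true signal f_* : ℤ → E with f_*^{(k)} ∈ W for all k and |f_*^{(k+1)}(u) − f_*^{(k)}(u)| ≤ Δ for all u and k, the out-of-band error satisfies for every k ∈ ℤ: e_+^{(k+1)} ≤ (1 − μβ)·e_+^{(k)} + μ·η^{(k)} + (√N + μ·|S|·τ̄)·Δ. -/

import Mathlib

open scoped RealInnerProductSpace BigOperators

/-!
Splitting the delayed residual `f_*^{(k-τ)} - f^{(k-τ)}` as
`(f_*^{(k)} - f^{(k)}) + (f_*^{(k-τ)} - f_*^{(k)}) + (f^{(k)} - f^{(k-τ)})`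
writes `f^{(k+1)}` as `(1 - μβ) f^{(k)}` plus `μ` times a vector of `W`, a signal-drift vector `A`,
and the vector `B` with `‖B‖ = η^{(k)}`. The projection `I - P` kills the `W` part and is
`1`-Lipschitz, and `‖A‖ ≤ |S| τ̄ Δ` because each coefficient of `A` telescopes over at most `τ̄`
steps of size `≤ Δ` while `‖P δ_u‖ ≤ 1`. The remaining term `√N Δ` is nonnegative slack.
-/

theorem abs_sub_sub_natCast_le_mul {a : ℤ → ℝ} {Δ : ℝ} (h : ∀ k, |a (k + 1) - a k| ≤ Δ)
    (j : ℤ) (m : ℕ) : |a j - a (j - m)| ≤ m * Δ := by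
  have := dist_le_range_sum_of_dist_le (f := fun n : ℕ => a (j - m + n)) (d := fun _ => Δ) m
    fun {n} _ => by simpa [Real.dist_eq, abs_sub_comm, add_assoc] using h (j - m + n)
  simpa [Real.dist_eq, abs_sub_comm] using this

theorem EuclideanSpace.norm_le_norm_of_abs_apply_le {ι : Type*} [Fintype ι]
    {x y : EuclideanSpace ℝ ι} (h : ∀ i, |x i| ≤ |y i|) : ‖x‖ ≤ ‖y‖ := by
  rw [EuclideanSpace.norm_eq, EuclideanSpace.norm_eq]
  gcongr with i
  simpa using h i

theorem EuclideanSpace.norm_sum_single_mul_le {ι : Type*} [Fintype ι] [DecidableEq ι]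
    {c : ι → ℝ} {M : ℝ} (hM : 0 ≤ M) (hc : ∀ i, |c i| ≤ M) (d : EuclideanSpace ℝ ι) :
    ‖∑ i, EuclideanSpace.single i (c i * d i)‖ ≤ M * ‖d‖ := by
  rw [← norm_smul_of_nonneg hM]
  refine EuclideanSpace.norm_le_norm_of_abs_apply_le fun i => ?_
  simpa [abs_mul, abs_of_nonneg hM] using
    mul_le_mul_of_nonneg_right (hc i) (abs_nonneg (d i))

theorem EuclideanSpace.norm_sum_sum_single_mul_le {α ι : Type*} [Fintype ι] [DecidableEq ι]
    (s : Finset α) {c : α → ι → ℝ} {d : α → EuclideanSpace ℝ ι} {M : ℝ} (hM : 0 ≤ M)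
    (hc : ∀ u ∈ s, ∀ i, |c u i| ≤ M) (hd : ∀ u ∈ s, ‖d u‖ ≤ 1) :
    ‖∑ u ∈ s, ∑ i, EuclideanSpace.single i (c u i * d u i)‖ ≤ s.card * M := by
  refine (norm_sum_le_of_le s fun u hu => ?_).trans_eq (by rw [Finset.sum_const, nsmul_eq_mul])
  exact (EuclideanSpace.norm_sum_single_mul_le hM (hc u hu) (d u)).trans
    (mul_le_of_le_one_right hM (hd u hu))

namespace Submodule

variable {E : Type*} [NormedAddCommGroup E] [InnerProductSpace ℝ E]
  (K : Submodule ℝ E) [K.HasOrthogonalProjection]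

theorem norm_sub_starProjection_le_of_eq_smul_add {c μ : ℝ} (hc : 0 ≤ c) (hμ : 0 ≤ μ)
    {x y w a : E} (hw : w ∈ K) (hy : y = c • x + μ • (w + a)) :
    ‖y - K.starProjection y‖ ≤ c * ‖x - K.starProjection x‖ + μ * ‖a‖ := by
  simp_rw [← starProjection_orthogonal_val]
  have hw' : Kᗮ.starProjection w = 0 := by
    rw [starProjection_orthogonal_val, starProjection_eq_self_iff.2 hw, sub_self]
  rw [hy, map_add, map_smul, map_smul, map_add, hw', zero_add]
  calc ‖c • Kᗮ.starProjection x + μ • Kᗮ.starProjection a‖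
      ≤ ‖c • Kᗮ.starProjection x‖ + ‖μ • Kᗮ.starProjection a‖ := norm_add_le _ _
    _ = c * ‖Kᗮ.starProjection x‖ + μ * ‖Kᗮ.starProjection a‖ := by
      rw [norm_smul_of_nonneg hc, norm_smul_of_nonneg hμ]
    _ ≤ c * ‖Kᗮ.starProjection x‖ + μ * ‖a‖ := by
      gcongr
      exact Kᗮ.norm_starProjection_apply_le a

end Submodule

theorem DLSR_out_of_band_error_recursion_general
    {N : ℕ} (W : Submodule ℝ (EuclideanSpace ℝ (Fin N)))
    (S : Finset (Fin N)) (τ : Fin N → Fin N → ℕ) (τbar : ℕ)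
    (hτ : ∀ u ∈ S, ∀ v : Fin N, 1 ≤ τ u v ∧ τ u v ≤ τbar)
    (μ β Δ : ℝ) (hμ : 0 < μ) (hμβ : μ * β ≤ 1)
    (fstar : ℤ → EuclideanSpace ℝ (Fin N))
    (hΔ : ∀ (k : ℤ) (u : Fin N), |fstar (k + 1) u - fstar k u| ≤ Δ)
    (f : ℤ → EuclideanSpace ℝ (Fin N))
    (hiter : ∀ (k : ℤ) (v : Fin N), f (k + 1) v =
      (1 - μ * β) * f k v +
      μ * ∑ u ∈ S, (fstar (k - τ u v) u - f (k - τ u v) u) *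
        (W.orthogonalProjectionOnto (EuclideanSpace.single u (1 : ℝ)) :
          EuclideanSpace ℝ (Fin N)) v)
    (ep η : ℤ → ℝ)
    (hep : ∀ k : ℤ, ep k =
      ‖f k - (W.orthogonalProjectionOnto (f k) : EuclideanSpace ℝ (Fin N))‖)
    (hη : ∀ k : ℤ, η k = ‖∑ u ∈ S, ∑ v : Fin N, EuclideanSpace.single v
      ((f k u - f (k - τ u v) u) *
        (W.orthogonalProjectionOnto (EuclideanSpace.single u (1 : ℝ)) :
          EuclideanSpace ℝ (Fin N)) v)‖) :
    ∀ k : ℤ, ep (k + 1) ≤ (1 - μ * β) * ep k + μ * η k +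
      (Real.sqrt (N : ℝ) + μ * S.card * τbar) * Δ := by
  intro k
  rcases N.eq_zero_or_pos with rfl | hN
  · simp [hep, hη, Finset.eq_empty_of_isEmpty S,
      Subsingleton.elim _ (0 : EuclideanSpace ℝ (Fin 0))]
  have hΔ₀ : 0 ≤ Δ := (abs_nonneg _).trans (hΔ 0 ⟨0, hN⟩)
  set d : Fin N → EuclideanSpace ℝ (Fin N) := fun u =>
    (W.orthogonalProjectionOnto (EuclideanSpace.single u (1 : ℝ)) : EuclideanSpace ℝ (Fin N))
  set C : EuclideanSpace ℝ (Fin N) := ∑ u ∈ S, (fstar k u - f k u) • d u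
  set A : EuclideanSpace ℝ (Fin N) := ∑ u ∈ S, ∑ v : Fin N,
    EuclideanSpace.single v ((fstar (k - τ u v) u - fstar k u) * d u v)
  set B : EuclideanSpace ℝ (Fin N) := ∑ u ∈ S, ∑ v : Fin N,
    EuclideanSpace.single v ((f k u - f (k - τ u v) u) * d u v)
  have hCW : C ∈ W := W.sum_mem fun u _ => W.smul_mem _ (Submodule.coe_mem _)
  have hstep : f (k + 1) = (1 - μ * β) • f k + μ • (C + (A + B)) := by
    ext v
    simp only [hiter, A, B, C, PiLp.add_apply, PiLp.smul_apply, smul_eq_mul, WithLp.ofLp_sum,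
      Finset.sum_apply, PiLp.ofLp_single, Finset.sum_pi_single, Finset.mem_univ, if_true]
    rw [← Finset.sum_add_distrib, ← Finset.sum_add_distrib]
    congr 2
    exact Finset.sum_congr rfl fun u _ => by ring
  have hdrift : ∀ u ∈ S, ∀ v, |fstar (k - τ u v) u - fstar k u| ≤ τbar * Δ := fun u hu v => by
    rw [abs_sub_comm]
    exact (abs_sub_sub_natCast_le_mul (a := fun j => fstar j u) (hΔ · u) k (τ u v)).trans
      (by gcongr; exact (hτ u hu v).2)
  have hA : ‖A‖ ≤ S.card * (τbar * Δ) :=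
    EuclideanSpace.norm_sum_sum_single_mul_le S (by positivity) hdrift fun u _ =>
      (W.norm_orthogonalProjectionOnto_apply_le _).trans_eq (by simp)
  have hout := W.norm_sub_starProjection_le_of_eq_smul_add (by linarith) hμ.le hCW hstep
  simp only [← W.starProjection_apply] at hep
  rw [hep, hep, hη]
  calc _ ≤ (1 - μ * β) * ‖f k - W.starProjection (f k)‖ + μ * (‖A‖ + ‖B‖) :=
        hout.trans (by gcongr; exact norm_add_le A B)
    _ ≤ _ := by nlinarith [Real.sqrt_nonneg N]

/-- In the DLSR setup with `μβ ≤ 1`, the out-of-band error satisfies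
`e_+^{(k+1)} ≤ (1 − μβ)e_+^{(k)} + μη^{(k)} + (√N + μ|S|τ̄)Δ`. -/
theorem DLSR_out_of_band_error_recursion
    {N : ℕ} (W : Submodule ℝ (EuclideanSpace ℝ (Fin N)))
    (S : Finset (Fin N)) (τ : Fin N → Fin N → ℕ) (τbar : ℕ)
    (hτ : ∀ u ∈ S, ∀ v : Fin N, 1 ≤ τ u v ∧ τ u v ≤ τbar)
    (T : EuclideanSpace ℝ (Fin N) →L[ℝ] EuclideanSpace ℝ (Fin N))
    (hT : ∀ g : EuclideanSpace ℝ (Fin N), T g =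
      ∑ u ∈ S, g u • (W.orthogonalProjectionOnto (EuclideanSpace.single u (1 : ℝ)) :
        EuclideanSpace ℝ (Fin N)))
    (hTW : ∀ g ∈ W, T g ∈ W)
    (hTsa : ∀ g ∈ W, ∀ h ∈ W, ⟪T g, h⟫ = ⟪g, T h⟫)
    (hTbnd : ∀ g ∈ W, 0 ≤ ⟪T g, g⟫ ∧ ⟪T g, g⟫ ≤ ‖g‖ ^ 2)
    (μ β Δ : ℝ) (hμ : 0 < μ) (hβ : 0 < β) (hμβ : μ * β ≤ 1)
    (fstar : ℤ → EuclideanSpace ℝ (Fin N)) (hfstarW : ∀ k : ℤ, fstar k ∈ W)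
    (hΔ : ∀ (k : ℤ) (u : Fin N), |fstar (k + 1) u - fstar k u| ≤ Δ)
    (f : ℤ → EuclideanSpace ℝ (Fin N))
    (hiter : ∀ (k : ℤ) (v : Fin N), f (k + 1) v =
      (1 - μ * β) * f k v +
      μ * ∑ u ∈ S, (fstar (k - τ u v) u - f (k - τ u v) u) *
        (W.orthogonalProjectionOnto (EuclideanSpace.single u (1 : ℝ)) :
          EuclideanSpace ℝ (Fin N)) v)
    (ftil : ℤ → EuclideanSpace ℝ (Fin N))
    (hftil : ∀ k : ℤ, ftil k ∈ W ∧ β • ftil k + T (ftil k) = T (fstar k))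
    (ep η : ℤ → ℝ)
    (hep : ∀ k : ℤ, ep k =
      ‖f k - (W.orthogonalProjectionOnto (f k) : EuclideanSpace ℝ (Fin N))‖)
    (hη : ∀ k : ℤ, η k = ‖∑ u ∈ S, ∑ v : Fin N, EuclideanSpace.single v
      ((f k u - f (k - τ u v) u) *
        (W.orthogonalProjectionOnto (EuclideanSpace.single u (1 : ℝ)) :
          EuclideanSpace ℝ (Fin N)) v)‖) :
    ∀ k : ℤ, ep (k + 1) ≤ (1 - μ * β) * ep k + μ * η k +
      (Real.sqrt (N : ℝ) + μ * S.card * τbar) * Δ :=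
  DLSR_out_of_band_error_recursion_general W S τ τbar hτ μ β Δ hμ hμβ fstar hΔ f hiter ep η hep hη
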